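/- If K_+ and K_− are virtual knots differing by a crossing change at an even crossing c with k = W(L_c), then W_{K_+}(t) − W_{K_−}(t) = t^k + t^{−k} − 2; this difference is zero if and only if k = 0. Hence a crossing can admit a cosmetic crossing change only if it is even and classical (W(L_c) = 0). -/

import Mathlib

open scoped Classical
open LaurentPolynomial

noncomputable section

/-- A Gauss diagram for an oriented virtual knot with `n` classical crossings: a circle
with `2 * n` marked points (positions in `ZMod (2*n)`, traversed in cyclic order), and for
each crossing `c` a signed oriented chord, recorded by the position `over c` of its
over-passage (head), the position `under c` of its under-passage (tail), and its sign. -/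
structure GaussDiagram (n : ℕ) where
  over' : Fin n → ZMod (2 * n)
  under : Fin n → ZMod (2 * n)
  sign : Fin n → ℤ
  endpoints_inj : Function.Injective
    (fun p : Fin n × Bool => if p.2 then over' p.1 else under p.1)
  sign_pm : ∀ c, sign c = 1 ∨ sign c = -1

namespace GaussDiagram

/-- `x` lies strictly inside the arc running forward (in the orientation of the circle)
from `a` to `b`. -/
def Between {m : ℕ} (a b x : ZMod m) : Prop :=
  (x - a).val < (b - a).val ∧ x ≠ a

variable {n : ℕ}

/-- After orientedly smoothing the crossing `c`, the first component of the resulting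
2-component link `L_c` (the component carrying the dot placed on the incoming understrand
of `c`) is the arc running forward from the over-passage of `c` to its under-passage. -/
def onComp1 (G : GaussDiagram n) (c : Fin n) (x : ZMod (2 * n)) : Prop :=
  Between (G.over' c) (G.under c) x

/-- The chords `c` and `d` intersect (interleave): exactly one endpoint of `d` lies in the
arc cut out by `c`; equivalently `d` becomes a linking crossing of the smoothed link `L_c`. -/
def Crosses (G : GaussDiagram n) (c d : Fin n) : Prop :=
  Xor' (G.onComp1 c (G.over' d)) (G.onComp1 c (G.under d))

/-- `d ∈ P_c`: `d` intersects `c` positively (traveling along the first component of `L_c`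
one passes *over* `d`). -/
def PosAt (G : GaussDiagram n) (c d : Fin n) : Prop :=
  G.Crosses c d ∧ G.onComp1 c (G.over' d)

/-- `d ∈ N_c`: `d` intersects `c` negatively (traveling along the first component of `L_c`
one passes *under* `d`). -/
def NegAt (G : GaussDiagram n) (c d : Fin n) : Prop :=
  G.Crosses c d ∧ G.onComp1 c (G.under d)

/-- The wriggle number `W(L_c) = lk_O(L_c) - lk_U(L_c)` of the ordered 2-component link
obtained by the oriented smoothing at `c`. -/
def wriggle (G : GaussDiagram n) (c : Fin n) : ℤ :=
  (∑ d ∈ Finset.univ.filter (fun d => G.PosAt c d), G.sign d)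
    - ∑ d ∈ Finset.univ.filter (fun d => G.NegAt c d), G.sign d

/-- The writhe: the sum of the signs of all crossings. -/
def writhe (G : GaussDiagram n) : ℤ := ∑ c, G.sign c

/-- The Wriggle Polynomial `W_K(t) = Σ_c sign(c) · t^{W(L_c)} - writhe(K)`, as a Laurent
polynomial over `ℤ`. -/
def wrigglePoly (G : GaussDiagram n) : LaurentPolynomial ℤ :=
  (∑ c, C (G.sign c) * T (G.wriggle c)) - C G.writhe

end GaussDiagram

namespace GaussDiagram

variable {n : ℕ}

/-- `G'` is obtained from `G` by a crossing change at the crossing `c₁`: the over/under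
data at `c₁` is exchanged (the chord is reversed) and its sign is switched, while all
other crossings are unchanged. -/
def IsCrossingChange (G G' : GaussDiagram n) (c₁ : Fin n) : Prop :=
  G'.over' = Function.update G.over' c₁ (G.under c₁) ∧
  G'.under = Function.update G.under c₁ (G.over' c₁) ∧
  G'.sign = Function.update G.sign c₁ (-(G.sign c₁))

/-- A crossing is odd iff the two occurrences of the crossing in the Gauss code are
separated by an odd number of letters, i.e. the forward distance between the two endpoints
of its chord is even. -/
def OddCrossing (G : GaussDiagram n) (c : Fin n) : Prop :=
  Even ((G.under c - G.over' c).val)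

end GaussDiagram

open GaussDiagram

/-!
Reversing the chord `c` exchanges the two arcs it cuts out of the circle, i.e. the two
components of `L_c`; so every chord meeting `c` moves between `P_c` and `N_c` and
`W(L_c)` changes sign. For `d ≠ c` the arc of `d` is unchanged, and the only altered chord,
`c`, switches both its side and its sign, so `W(L_d)` is unchanged. Hence only the term of
`c` and the writhe change, and `W_G - W_{G'} = sign(c) (t^k + t^{-k} - 2)`; for `k ≠ 0` the
coefficient of `t^k` in `t^k + t^{-k} - 2` is `1`.
-/

namespace GaussDiagram

theorem between_iff_not_between_swap {m : ℕ} [NeZero m] {a b x : ZMod m} (hab : a ≠ b)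
    (hxa : x ≠ a) (hxb : x ≠ b) : Between a b x ↔ ¬ Between b a x := by
  have hy : (x - a).val ≠ (b - a).val := fun h => hxb (by simpa using ZMod.val_injective _ h)
  have hab' : (a - b).val = m - (b - a).val := by
    rw [← neg_sub, ZMod.neg_val, if_neg (sub_ne_zero.2 hab.symm)]
  have hlt := ZMod.val_lt (b - a)
  unfold Between
  rcases le_or_gt (b - a).val (x - a).val with h | h
  · have hxb' : (x - b).val = (x - a).val - (b - a).val := by
      rw [← ZMod.val_sub h, sub_sub_sub_cancel_right]
    have := ZMod.val_lt (x - a)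
    simp only [hxb', hab', hxa, hxb, ne_eq, not_false_eq_true, and_true]
    omega
  · have hba : (b - x).val = (b - a).val - (x - a).val := by
      rw [← ZMod.val_sub h.le, sub_sub_sub_cancel_right]
    have hxb' : (x - b).val = m - ((b - a).val - (x - a).val) := by
      rw [← hba, ← neg_sub, ZMod.neg_val, if_neg (sub_ne_zero.2 hxb.symm)]
    simp only [hxb', hab', hxa, hxb, ne_eq, not_false_eq_true, and_true]
    omega

variable {n : ℕ}

theorem endpoint_ne_endpoint (G : GaussDiagram n) {c d : Fin n} (hcd : c ≠ d) (b b' : Bool) :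
    (if b then G.over' c else G.under c) ≠ (if b' then G.over' d else G.under d) :=
  fun h => hcd (congrArg Prod.fst (G.endpoints_inj (a₁ := (c, b)) (a₂ := (d, b')) h))

theorem over_ne_under (G : GaussDiagram n) (c : Fin n) : G.over' c ≠ G.under c :=
  fun h => Bool.noConfusion <|
    congrArg Prod.snd (G.endpoints_inj (a₁ := (c, true)) (a₂ := (c, false)) h)

theorem posAt_iff (G : GaussDiagram n) (c d : Fin n) :
    G.PosAt c d ↔ G.onComp1 c (G.over' d) ∧ ¬ G.onComp1 c (G.under d) := by
  change Xor _ _ ∧ _ ↔ _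
  rw [xor_def]
  tauto

theorem negAt_iff (G : GaussDiagram n) (c d : Fin n) :
    G.NegAt c d ↔ G.onComp1 c (G.under d) ∧ ¬ G.onComp1 c (G.over' d) := by
  change Xor _ _ ∧ _ ↔ _
  rw [xor_def]
  tauto

theorem not_posAt_self (G : GaussDiagram n) (c : Fin n) : ¬ G.PosAt c c := by
  simp [posAt_iff, onComp1, Between]

theorem not_negAt_self (G : GaussDiagram n) (c : Fin n) : ¬ G.NegAt c c := by
  simp [negAt_iff, onComp1, Between]

theorem wriggle_eq_sum (G : GaussDiagram n) (c : Fin n) :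
    G.wriggle c = ∑ d, ((if G.PosAt c d then G.sign d else 0)
      - (if G.NegAt c d then G.sign d else 0)) := by
  rw [wriggle, Finset.sum_sub_distrib, Finset.sum_filter, Finset.sum_filter]

namespace IsCrossingChange

variable {G G' : GaussDiagram n} {c : Fin n} (h : G.IsCrossingChange G' c)
include h

theorem over_of_ne {d : Fin n} (hd : d ≠ c) : G'.over' d = G.over' d := by
  rw [h.1, Function.update_of_ne hd]

theorem under_of_ne {d : Fin n} (hd : d ≠ c) : G'.under d = G.under d := by
  rw [h.2.1, Function.update_of_ne hd]

theorem sign_of_ne {d : Fin n} (hd : d ≠ c) : G'.sign d = G.sign d := by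
  rw [h.2.2, Function.update_of_ne hd]

theorem over_self : G'.over' c = G.under c := by rw [h.1, Function.update_self]

theorem under_self : G'.under c = G.over' c := by rw [h.2.1, Function.update_self]

theorem sign_self : G'.sign c = -G.sign c := by rw [h.2.2, Function.update_self]

theorem onComp1_self_iff {x : ZMod (2 * n)} (hxo : x ≠ G.over' c) (hxu : x ≠ G.under c) :
    G'.onComp1 c x ↔ ¬ G.onComp1 c x := by
  have : NeZero (2 * n) := ⟨by have := c.pos; omega⟩
  rw [onComp1, onComp1, h.over_self, h.under_self,
    between_iff_not_between_swap (G.over_ne_under c).symm hxu hxo]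

theorem onComp1_of_ne {d : Fin n} (hd : d ≠ c) : G'.onComp1 d = G.onComp1 d := by
  ext x
  rw [onComp1, onComp1, h.over_of_ne hd, h.under_of_ne hd]

theorem onComp1_self_over_iff {d : Fin n} (hd : d ≠ c) :
    G'.onComp1 c (G'.over' d) ↔ ¬ G.onComp1 c (G.over' d) := by
  rw [h.over_of_ne hd]
  exact h.onComp1_self_iff (G.endpoint_ne_endpoint hd true true)
    (G.endpoint_ne_endpoint hd true false)

theorem onComp1_self_under_iff {d : Fin n} (hd : d ≠ c) :
    G'.onComp1 c (G'.under d) ↔ ¬ G.onComp1 c (G.under d) := by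
  rw [h.under_of_ne hd]
  exact h.onComp1_self_iff (G.endpoint_ne_endpoint hd false true)
    (G.endpoint_ne_endpoint hd false false)

theorem posAt_self_iff {d : Fin n} (hd : d ≠ c) : G'.PosAt c d ↔ G.NegAt c d := by
  rw [posAt_iff, negAt_iff, h.onComp1_self_over_iff hd, h.onComp1_self_under_iff hd]
  tauto

theorem negAt_self_iff {d : Fin n} (hd : d ≠ c) : G'.NegAt c d ↔ G.PosAt c d := by
  rw [posAt_iff, negAt_iff, h.onComp1_self_over_iff hd, h.onComp1_self_under_iff hd]
  tauto

theorem posAt_of_ne_iff {d e : Fin n} (hd : d ≠ c) (he : e ≠ c) :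
    G'.PosAt d e ↔ G.PosAt d e := by
  rw [posAt_iff, posAt_iff, h.onComp1_of_ne hd, h.over_of_ne he, h.under_of_ne he]

theorem negAt_of_ne_iff {d e : Fin n} (hd : d ≠ c) (he : e ≠ c) :
    G'.NegAt d e ↔ G.NegAt d e := by
  rw [negAt_iff, negAt_iff, h.onComp1_of_ne hd, h.over_of_ne he, h.under_of_ne he]

theorem posAt_of_ne_self_iff {d : Fin n} (hd : d ≠ c) : G'.PosAt d c ↔ G.NegAt d c := by
  rw [posAt_iff, negAt_iff, h.onComp1_of_ne hd, h.over_self, h.under_self]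

theorem negAt_of_ne_self_iff {d : Fin n} (hd : d ≠ c) : G'.NegAt d c ↔ G.PosAt d c := by
  rw [posAt_iff, negAt_iff, h.onComp1_of_ne hd, h.over_self, h.under_self]

theorem wriggle_self : G'.wriggle c = -G.wriggle c := by
  rw [wriggle_eq_sum, wriggle_eq_sum, ← Finset.sum_neg_distrib]
  refine Finset.sum_congr rfl fun d _ => ?_
  by_cases hd : d = c
  · subst hd
    simp [not_posAt_self, not_negAt_self]
  · rw [h.posAt_self_iff hd, h.negAt_self_iff hd, h.sign_of_ne hd]
    split_ifs <;> ring

theorem wriggle_of_ne {d : Fin n} (hd : d ≠ c) : G'.wriggle d = G.wriggle d := by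
  rw [wriggle_eq_sum, wriggle_eq_sum]
  refine Finset.sum_congr rfl fun e _ => ?_
  by_cases he : e = c
  · subst he
    rw [h.posAt_of_ne_self_iff hd, h.negAt_of_ne_self_iff hd, h.sign_self]
    split_ifs <;> ring
  · rw [h.posAt_of_ne_iff hd he, h.negAt_of_ne_iff hd he, h.sign_of_ne he]

theorem writhe_sub : G.writhe - G'.writhe = 2 * G.sign c := by
  rw [writhe, writhe, ← Finset.sum_sub_distrib,
    Finset.sum_eq_single c (fun d _ hd => by rw [h.sign_of_ne hd, sub_self]) (by simp),
    h.sign_self]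
  ring

theorem wrigglePoly_sub : G.wrigglePoly - G'.wrigglePoly
    = C (G.sign c) * (T (G.wriggle c) + T (-G.wriggle c) - 2) := by
  have hsum : ∑ d, C (G.sign d) * T (G.wriggle d) - ∑ d, C (G'.sign d) * T (G'.wriggle d)
      = C (G.sign c) * (T (G.wriggle c) + T (-G.wriggle c)) := by
    rw [← Finset.sum_sub_distrib, Finset.sum_eq_single c
      (fun d _ hd => by rw [h.wriggle_of_ne hd, h.sign_of_ne hd, sub_self]) (by simp),
      h.wriggle_self, h.sign_self, map_neg]
    ring
  have hwrithe : C G.writhe - C G'.writhe = C (G.sign c) * (2 : LaurentPolynomial ℤ) := by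
    rw [← map_sub, h.writhe_sub, map_mul, mul_comm, map_ofNat]
  rw [wrigglePoly, wrigglePoly, sub_sub_sub_comm, hsum, hwrithe]
  ring

end IsCrossingChange

end GaussDiagram

theorem LaurentPolynomial.T_add_T_neg_sub_two_eq_zero_iff {R : Type*} [CommRing R]
    [Nontrivial R] {k : ℤ} : (T k + T (-k) - 2 : R[T;T⁻¹]) = 0 ↔ k = 0 := by
  constructor
  · intro hk
    by_contra hk0
    have hcoeff := congrArg (fun p : R[T;T⁻¹] => p.coeff k) hk
    rw [← map_ofNat C] at hcoeff
    simp [hk0, show -k ≠ k by omega] at hcoeff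
  · rintro rfl
    rw [neg_zero, T_zero]
    norm_num

theorem even_crossing_change_difference_general {n : ℕ} (G G' : GaussDiagram n) (c : Fin n)
    (hcc : GaussDiagram.IsCrossingChange G G' c)
    (hpos : G.sign c = 1) :
    G.wrigglePoly - G'.wrigglePoly
        = T (G.wriggle c) + T (-(G.wriggle c)) - 2 ∧
    (G.wrigglePoly - G'.wrigglePoly = 0 ↔ G.wriggle c = 0) ∧
    (G.wrigglePoly = G'.wrigglePoly ↔ G.wriggle c = 0) := by
  have hdiff : G.wrigglePoly - G'.wrigglePoly = T (G.wriggle c) + T (-(G.wriggle c)) - 2 := by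
    rw [hcc.wrigglePoly_sub, hpos, map_one, one_mul]
  have hzero : G.wrigglePoly - G'.wrigglePoly = 0 ↔ G.wriggle c = 0 := by
    rw [hdiff, LaurentPolynomial.T_add_T_neg_sub_two_eq_zero_iff]
  exact ⟨hdiff, hzero, sub_eq_zero.symm.trans hzero⟩

/-- If `K₊` and `K₋` are virtual knots differing by a crossing change at an
even crossing `c` (at which `K₊` is positive), then with `k = W(L_c)` one has
`W_{K₊}(t) - W_{K₋}(t) = t^k + t^{-k} - 2`, and this difference is zero iff `k = 0`.
Hence a crossing can admit a cosmetic crossing change only if it is even and classical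
(`W(L_c) = 0`). -/
theorem even_crossing_change_difference {n : ℕ} (G G' : GaussDiagram n) (c : Fin n)
    (heven : ¬ G.OddCrossing c)
    (hcc : GaussDiagram.IsCrossingChange G G' c)
    (hpos : G.sign c = 1) :
    G.wrigglePoly - G'.wrigglePoly
        = T (G.wriggle c) + T (-(G.wriggle c)) - 2 ∧
    (G.wrigglePoly - G'.wrigglePoly = 0 ↔ G.wriggle c = 0) ∧
    (G.wrigglePoly = G'.wrigglePoly ↔ G.wriggle c = 0) :=
  even_crossing_change_difference_general G G' c hcc hpos
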